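/- In the setting of self-normalized importance sampling with |φ| ≤ 1, π(g) > 0 and π(g²) < ∞, the bias satisfies |E[μ^N(φ) − μ(φ)]| ≤ 12ρ/N, where ρ = π(g²)/π(g)². -/

import Mathlib

/-!
Write `S = ∑ g(uⁿ)`, `T = ∑ φ(uⁿ) g(uⁿ)`, `c = μ(φ)`, `M = E S = N π(g)` and `A = T - c S`,
which has mean zero. Since `T / S - c = A / M + A (M - S) / (S M)`, the bias is the mean of the
second term alone, and that term is at most `(A² / 2 + 10 (S - M)²) / M²`: on `{2 S ≤ M}` it is
at most `2` because `|A| ≤ 2 S`, while `(S - M)² ≥ M² / 4`; off it, `S M ≥ M² / 2` and AM-GM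
apply. As `A` and `S` are i.i.d. sums, `E A² = N Var_π((φ - c) g) ≤ 4 N π(g²)` and
`E (S - M)² = N Var_π(g) ≤ N π(g²)`, so the bias is at most `(2 + 10) ρ / N`.
-/

open MeasureTheory ProbabilityTheory

lemma abs_sub_mul_le_two_mul {s t c : ℝ} (ht : |t| ≤ s) (hc : |c| ≤ 1) :
    |t - c * s| ≤ 2 * s := by
  have hs : 0 ≤ s := (abs_nonneg t).trans ht
  calc |t - c * s| ≤ |t| + |c| * s := by simpa [abs_mul, abs_of_nonneg hs] using abs_sub t (c * s)
    _ ≤ 2 * s := by nlinarith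

lemma abs_div_sub_sub_div_le {s t c M : ℝ} (ht : |t| ≤ s) (hc : |c| ≤ 1) (hM : 0 < M) :
    |t / s - c - (t - c * s) / M| ≤ ((t - c * s) ^ 2 / 2 + 10 * (s - M) ^ 2) / M ^ 2 := by
  rcases ((abs_nonneg t).trans ht).eq_or_lt with rfl | hs
  · obtain rfl : t = 0 := abs_nonpos_iff.mp ht
    rw [le_div_iff₀ (by positivity)]
    simp only [div_zero, zero_sub, mul_zero, sub_zero, abs_neg, zero_div]
    nlinarith
  have hts := abs_sub_mul_le_two_mul ht hc
  have hid : t / s - c - (t - c * s) / M = (t - c * s) * (M - s) / (s * M) := by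
    field_simp
  rw [hid, abs_div, abs_mul, abs_of_pos (mul_pos hs hM), ← sq_abs (t - c * s), ← sq_abs (s - M),
    abs_sub_comm s M, div_le_div_iff₀ (mul_pos hs hM) (by positivity)]
  set a := |t - c * s|
  set d := |M - s|
  have hd : 0 ≤ d := abs_nonneg _
  rcases le_or_gt (2 * s) M with hsM | hsM
  · have hdM : M ≤ 2 * d := by
      have := le_abs_self (M - s)
      linarith
    nlinarith [mul_nonneg (mul_nonneg (sub_nonneg.2 hts) hd) (sq_nonneg M),
      mul_nonneg (mul_nonneg (mul_nonneg (sub_nonneg.2 hdM) hs.le) hd) hM.le,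
      mul_nonneg (mul_nonneg (sq_nonneg d) hs.le) hM.le,
      mul_nonneg (mul_nonneg (sq_nonneg a) hs.le) hM.le]
  · nlinarith [mul_nonneg (mul_nonneg (sq_nonneg d) hs.le) hM.le,
      mul_nonneg (mul_nonneg (add_nonneg (sq_nonneg a) (sq_nonneg d)) hM.le)
        (sub_nonneg.2 hsM.le),
      mul_nonneg (sq_nonneg (a - 2 * d)) (sq_nonneg M)]

section RatioEstimator

variable {Ω : Type*} [MeasurableSpace Ω] {P : Measure Ω} {S T : Ω → ℝ} {c : ℝ}

lemma abs_le_one_of_integral_eq_mul (hS : Integrable S P) (hT : Integrable T P)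
    (hTS : ∀ ω, |T ω| ≤ S ω) (hSpos : 0 < P[S]) (hc : P[T] = c * P[S]) : |c| ≤ 1 := by
  refine (mul_le_iff_le_one_left hSpos).1 ?_
  calc |c| * P[S] = |P[T]| := by rw [hc, abs_mul, abs_of_pos hSpos]
    _ ≤ ∫ ω, |T ω| ∂P := abs_integral_le_integral_abs
    _ ≤ P[S] := integral_mono hT.abs hS hTS

variable [IsProbabilityMeasure P]

lemma variance_sub_mul_le (hS : MemLp S 2 P) (hT : MemLp T 2 P) (hTS : ∀ ω, |T ω| ≤ S ω)
    (hc : |c| ≤ 1) : Var[fun ω => T ω - c * S ω; P] ≤ 4 * ∫ ω, S ω ^ 2 ∂P := by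
  refine (variance_le_expectation_sq (hT.sub (hS.const_mul c)).1).trans ?_
  rw [← integral_const_mul]
  refine integral_mono_of_nonneg (ae_of_all _ fun ω => sq_nonneg _)
    (hS.integrable_sq.const_mul 4) (ae_of_all _ fun ω => ?_)
  obtain ⟨hlo, hhi⟩ := abs_le.1 (abs_sub_mul_le_two_mul (hTS ω) hc)
  simp only [Pi.pow_apply, Pi.sub_apply]
  nlinarith [sq_le_sq' hlo hhi]

lemma abs_integral_div_sub_le (hS : MemLp S 2 P) (hT : MemLp T 2 P)
    (hTS : ∀ ω, |T ω| ≤ S ω) (hSpos : 0 < P[S]) (hc : P[T] = c * P[S]) :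
    |∫ ω, (T ω / S ω - c) ∂P|
      ≤ (Var[fun ω => T ω - c * S ω; P] / 2 + 10 * Var[S; P]) / P[S] ^ 2 := by
  set M := P[S]
  set A : Ω → ℝ := fun ω => T ω - c * S ω
  have hA : MemLp A 2 P := hT.sub (hS.const_mul c)
  have hSM : MemLp (fun ω => S ω - M) 2 P := hS.sub (memLp_const M)
  have hA0 : P[A] = 0 := by
    simp only [A, integral_sub (hT.integrable one_le_two) ((hS.integrable one_le_two).const_mul c),
      integral_const_mul, hc]
    exact sub_self _
  have hc1 : |c| ≤ 1 := abs_le_one_of_integral_eq_mul (hS.integrable one_le_two)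
    (hT.integrable one_le_two) hTS hSpos hc
  have hratio : Integrable (fun ω => T ω / S ω - c) P := by
    refine (Integrable.of_bound (C := 1)
      (hT.1.aemeasurable.div hS.1.aemeasurable).aestronglyMeasurable ?_).sub (integrable_const c)
    filter_upwards with ω
    have hS0 : 0 ≤ S ω := (abs_nonneg _).trans (hTS ω)
    rw [Real.norm_eq_abs, Pi.div_apply, abs_div, abs_of_nonneg hS0]
    exact div_le_one_of_le₀ (hTS ω) hS0
  have hG : Integrable (fun ω => (A ω ^ 2 / 2 + 10 * (S ω - M) ^ 2) / M ^ 2) P :=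
    ((hA.integrable_sq.div_const 2).add (hSM.integrable_sq.const_mul 10)).div_const _
  calc |∫ ω, (T ω / S ω - c) ∂P| = |∫ ω, (T ω / S ω - c - A ω / M) ∂P| := by
        rw [integral_sub hratio ((hA.integrable one_le_two).div_const M), integral_div, hA0,
          zero_div, sub_zero]
    _ ≤ ∫ ω, (A ω ^ 2 / 2 + 10 * (S ω - M) ^ 2) / M ^ 2 ∂P :=
        abs_integral_le_integral_abs.trans <| integral_mono
          (hratio.sub ((hA.integrable one_le_two).div_const M)).abs hG
          fun ω => abs_div_sub_sub_div_le (hTS ω) hc1 hSpos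
    _ = (Var[A; P] / 2 + 10 * Var[S; P]) / M ^ 2 := by
        rw [variance_eq_integral hA.1.aemeasurable, variance_eq_integral hS.1.aemeasurable, hA0,
          integral_div, integral_add (hA.integrable_sq.div_const 2) (hSM.integrable_sq.const_mul 10),
          integral_div, integral_const_mul]
        simp only [sub_zero]
        rfl

end RatioEstimator

section IID

variable {X : Type*} [MeasurableSpace X] {π : Measure X} [IsProbabilityMeasure π] {N : ℕ}
  {f w : X → ℝ}

lemma memLp_sum_comp_eval {p : ENNReal} (hf : MemLp f p π) :
    MemLp (fun u : Fin N → X => ∑ n, f (u n)) p (Measure.pi fun _ => π) :=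
  memLp_finsetSum _ fun n _ => hf.comp_measurePreserving (measurePreserving_eval _ n)

lemma integral_sum_comp_eval (hf : Integrable f π) :
    ∫ u : Fin N → X, ∑ n, f (u n) ∂(Measure.pi fun _ => π) = N * ∫ x, f x ∂π := by
  rw [integral_finsetSum _ fun n _ => integrable_comp_eval hf]
  simp [integral_comp_eval (μ := fun _ : Fin N => π) hf.aestronglyMeasurable]

lemma variance_sum_comp_eval (hf : MemLp f 2 π) :
    Var[fun u : Fin N → X => ∑ n, f (u n); Measure.pi fun _ => π] = N * Var[f; π] := by
  simpa [Finset.sum_fn] using variance_sum_pi (μ := fun _ : Fin N => π) (X := fun _ => f)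
    fun _ => hf

lemma abs_integral_sum_div_sum_sub_le (hw : MemLp w 2 π) (hf : MemLp f 2 π)
    (hfw : ∀ x, |f x| ≤ w x) (hwpos : 0 < π[w]) (hN : 0 < N) :
    |∫ u : Fin N → X, ((∑ n, f (u n)) / (∑ n, w (u n)) - π[f] / π[w])
        ∂(Measure.pi fun _ => π)|
      ≤ (Var[fun x => f x - π[f] / π[w] * w x; π] / 2 + 10 * Var[w; π]) / (N * π[w] ^ 2) := by
  have key := abs_integral_div_sub_le (P := Measure.pi fun _ : Fin N => π) (c := π[f] / π[w])
    (memLp_sum_comp_eval hw) (memLp_sum_comp_eval hf)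
    (fun u => (Finset.abs_sum_le_sum_abs _ _).trans (Finset.sum_le_sum fun n _ => hfw _))
    (by rw [integral_sum_comp_eval (hw.integrable one_le_two)]; positivity)
    (by
      rw [integral_sum_comp_eval (hw.integrable one_le_two),
        integral_sum_comp_eval (hf.integrable one_le_two), mul_left_comm,
        div_mul_cancel₀ _ hwpos.ne'])
  simp only [Finset.mul_sum, ← Finset.sum_sub_distrib] at key
  rw [variance_sum_comp_eval hw, integral_sum_comp_eval (hw.integrable one_le_two),
    variance_sum_comp_eval (f := fun x => f x - π[f] / π[w] * w x)
      (hf.sub (hw.const_mul _))] at key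
  refine key.trans (le_of_eq ?_)
  generalize Var[fun x => f x - π[f] / π[w] * w x; π] = v
  field_simp

end IID

/-- Non-asymptotic bias bound for self-normalized importance sampling over
bounded test functions: `|E[μ^N(φ) - μ(φ)]| ≤ 12ρ/N` with `ρ = π(g²)/π(g)²`. -/
theorem stmt_1 {X : Type*} [MeasurableSpace X] (π : Measure X) [IsProbabilityMeasure π]
    (g : X → ℝ) (hgm : Measurable g) (hg0 : ∀ x, 0 ≤ g x)
    (hgpos : 0 < ∫ x, g x ∂π)
    (hg2 : Integrable (fun x => (g x) ^ 2) π)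
    (N : ℕ) (hN : 0 < N)
    (φ : X → ℝ) (hφm : Measurable φ) (hφ : ∀ x, |φ x| ≤ 1) :
    |∫ u : Fin N → X,
        ((∑ n, φ (u n) * g (u n)) / (∑ m, g (u m))
          - (∫ x, φ x * g x ∂π) / (∫ x, g x ∂π))
      ∂(Measure.pi fun _ => π)|
      ≤ 12 * ((∫ x, (g x) ^ 2 ∂π) / (∫ x, g x ∂π) ^ 2) / N := by
  have hg : MemLp g 2 π := (memLp_two_iff_integrable_sq hgm.aestronglyMeasurable).2 hg2
  have hφg_le : ∀ x, |φ x * g x| ≤ g x := fun x => by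
    rw [abs_mul, abs_of_nonneg (hg0 x)]
    exact mul_le_of_le_one_left (hg0 x) (hφ x)
  have hφg : MemLp (fun x => φ x * g x) 2 π := hg.of_le (hφm.mul hgm).aestronglyMeasurable
    (ae_of_all _ fun x => by simpa [abs_of_nonneg (hg0 x)] using hφg_le x)
  have hc : |(∫ x, φ x * g x ∂π) / ∫ x, g x ∂π| ≤ 1 :=
    abs_le_one_of_integral_eq_mul (hg.integrable one_le_two) (hφg.integrable one_le_two) hφg_le
      hgpos (div_mul_cancel₀ _ hgpos.ne').symm
  refine (abs_integral_sum_div_sum_sub_le hg hφg hφg_le hgpos hN).trans ?_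
  calc _ ≤ (4 * (∫ x, g x ^ 2 ∂π) / 2 + 10 * ∫ x, g x ^ 2 ∂π) / (N * (∫ x, g x ∂π) ^ 2) := by
        gcongr
        · exact variance_sub_mul_le hg hφg hφg_le hc
        · exact variance_le_expectation_sq hg.1
    _ = 12 * ((∫ x, g x ^ 2 ∂π) / (∫ x, g x ∂π) ^ 2) / N := by
        field_simp
        ring
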